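/- Let q ∈ (1,∞) and κ ≥ 0. For every δ > 0 there is a constant C_δ ≥ 1, depending only on δ and q, such that for all P, Q, R ∈ ℝ^{N×n}: (S(P) − S(Q)) : (R − Q) ≤ δ |F(P) − F(Q)|² + C_δ |F(R) − F(Q)|². -/

import Mathlib

/-!
Write `s = q - 2 > -1` and `φ_a(d) = (κ + a + d) ^ s * d ^ 2` for the shifted N-function. Then
`|S(P) - S(Q)| ≲ φ_{|Q|}(|P - Q|) / |P - Q|` and `φ_{|Q|}(|P - Q|) ≲ |F(P) - F(Q)|²`: both squared
norms are affine in `⟪P, Q⟫`, so it suffices to check them for parallel `P, Q`, where they become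
one-dimensional estimates for `x ↦ (κ + x) ^ t * x` that follow from Bernoulli's inequality.
Cauchy–Schwarz and the Young inequality `φ_a(d) e / d ≤ ε φ_a(d) + C_ε φ_a(e)` for the shifted
N-function finish the proof, with `δ` a multiple of `ε`.
-/

open Real
open scoped RealInnerProductSpace

lemma div_rpow_one_add_mul_eq {t u v : ℝ} (ht : -1 < t) (hu : 0 < u) (hv : 0 ≤ v) :
    (v / u) ^ (1 + t) * (u ^ t * u) = v ^ t * v := by
  have h : t + 1 ≠ 0 := by linarith
  rw [div_rpow hv hu.le, add_comm 1 t, rpow_add_one' hv h, rpow_add_one' hu.le h]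
  have : u ^ t * u ≠ 0 := by positivity
  field_simp

lemma one_add_mul_div_sub_one_mul_eq {t u v : ℝ} (hu : 0 < u) :
    (1 + (1 + t) * (v / u - 1)) * (u ^ t * u) = u ^ t * u - (1 + t) * (u ^ t * (u - v)) := by
  field_simp; ring

/-- Bernoulli's inequality, multiplied out: the tangent to `u ↦ u ^ (1 + t)` lies below its graph
for `0 ≤ t` and above it for `t ≤ 0`. -/
lemma rpow_mul_self_sub_le {t u v : ℝ} (ht : 0 ≤ t) (hv : 0 ≤ v) (hvu : v ≤ u) :
    u ^ t * u - v ^ t * v ≤ (1 + t) * (u ^ t * (u - v)) := by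
  rcases (hv.trans hvu).eq_or_lt with rfl | hu
  · simp [le_antisymm hvu hv]
  have bernoulli := one_add_mul_self_le_rpow_one_add (s := v / u - 1)
    (by linarith [div_nonneg hv hu.le]) (by linarith : 1 ≤ 1 + t)
  rw [add_sub_cancel] at bernoulli
  have := mul_le_mul_of_nonneg_right bernoulli (by positivity : 0 ≤ u ^ t * u)
  rw [div_rpow_one_add_mul_eq (by linarith) hu hv, one_add_mul_div_sub_one_mul_eq hu] at this
  linarith

lemma le_rpow_mul_self_sub {t u v : ℝ} (ht₁ : -1 < t) (ht₀ : t ≤ 0) (hv : 0 ≤ v) (hvu : v ≤ u) :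
    (1 + t) * (u ^ t * (u - v)) ≤ u ^ t * u - v ^ t * v := by
  rcases (hv.trans hvu).eq_or_lt with rfl | hu
  · simp [le_antisymm hvu hv]
  have bernoulli := rpow_one_add_le_one_add_mul_self (s := v / u - 1)
    (by linarith [div_nonneg hv hu.le]) (by linarith : 0 ≤ 1 + t) (by linarith)
  rw [add_sub_cancel] at bernoulli
  have := mul_le_mul_of_nonneg_right bernoulli (by positivity : 0 ≤ u ^ t * u)
  rw [div_rpow_one_add_mul_eq ht₁ hu hv, one_add_mul_div_sub_one_mul_eq hu] at this
  linarith

lemma rpow_mul_le_rpow_mul_of_nonpos {t u v w : ℝ} (ht : t ≤ 0) (hw : 0 ≤ w) (hwv : w ≤ v)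
    (hvu : v ≤ u) : u ^ t * w ≤ v ^ t * w := by
  rcases hw.eq_or_lt with rfl | hw
  · simp
  exact mul_le_mul_of_nonneg_right (rpow_le_rpow_of_nonpos (hw.trans_le hwv) hvu ht) hw.le

lemma rpow_le_rpow_abs_mul_rpow {s u v l : ℝ} (hl : 1 ≤ l) (hu : 0 ≤ u) (hv : 0 ≤ v)
    (huv : u ≤ l * v) (hvu : v ≤ l * u) : u ^ s ≤ l ^ |s| * v ^ s := by
  rcases le_or_gt 0 s with hs | hs
  · rw [abs_of_nonneg hs, ← mul_rpow (by linarith) hv]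
    exact rpow_le_rpow hu huv hs
  rcases hv.eq_or_lt with rfl | hv₀
  · rw [le_antisymm (by simpa using huv) hu]
    exact le_mul_of_one_le_left (rpow_nonneg le_rfl s) (one_le_rpow hl (abs_nonneg s))
  have hl₀ : 0 < l := by linarith
  calc u ^ s ≤ (v / l) ^ s :=
        rpow_le_rpow_of_nonpos (by positivity) ((div_le_iff₀' hl₀).2 hvu) hs.le
    _ = l ^ |s| * v ^ s := by
        rw [div_rpow hv hl₀.le, abs_of_neg hs, rpow_neg hl₀.le]
        ring

lemma add_rpow_mul_sub_le {κ t x y : ℝ} (hκ : 0 ≤ κ) (hy : 0 ≤ y) (hyx : y ≤ x) :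
    (κ + x) ^ t * x - (κ + y) ^ t * y ≤ max 1 (1 + t) * ((κ + x) ^ t * (x - y)) := by
  have hxy : 0 ≤ (κ + x) ^ t * (x - y) := mul_nonneg (rpow_nonneg (by linarith) t) (by linarith)
  rcases le_or_gt 0 t with ht | ht
  · have htan := rpow_mul_self_sub_le ht (by linarith : 0 ≤ κ + y) (by linarith : κ + y ≤ κ + x)
    have hmono : (κ + y) ^ t ≤ (κ + x) ^ t := rpow_le_rpow (by linarith) (by linarith) ht
    calc (κ + x) ^ t * x - (κ + y) ^ t * y
        = ((κ + x) ^ t * (κ + x) - (κ + y) ^ t * (κ + y)) - κ * ((κ + x) ^ t - (κ + y) ^ t) := by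
          ring
      _ ≤ (1 + t) * ((κ + x) ^ t * (x - y)) := by
          rw [add_sub_add_left_eq_sub] at htan
          nlinarith [mul_nonneg hκ (sub_nonneg.2 hmono)]
      _ ≤ _ := mul_le_mul_of_nonneg_right (le_max_right _ _) hxy
  · have := rpow_mul_le_rpow_mul_of_nonpos ht.le hy (by linarith : y ≤ κ + y)
      (by linarith : κ + y ≤ κ + x)
    nlinarith [le_max_left 1 (1 + t)]

lemma le_add_rpow_mul_sub {κ t x y : ℝ} (ht : -1 < t) (hκ : 0 ≤ κ) (hy : 0 ≤ y) (hyx : y ≤ x) :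
    min 1 (1 + t) * ((κ + x) ^ t * (x - y)) ≤ (κ + x) ^ t * x - (κ + y) ^ t * y := by
  have hxy : 0 ≤ (κ + x) ^ t * (x - y) := mul_nonneg (rpow_nonneg (by linarith) t) (by linarith)
  rcases le_or_gt 0 t with ht₀ | ht₀
  · have hmono : (κ + y) ^ t ≤ (κ + x) ^ t := rpow_le_rpow (by linarith) (by linarith) ht₀
    nlinarith [min_le_left 1 (1 + t)]
  · have htan := le_rpow_mul_self_sub ht ht₀.le (by linarith : 0 ≤ κ + y)
      (by linarith : κ + y ≤ κ + x)
    have hκ' := rpow_mul_le_rpow_mul_of_nonpos ht₀.le hκ (by linarith : κ ≤ κ + y)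
      (by linarith : κ + y ≤ κ + x)
    rw [add_sub_add_left_eq_sub] at htan
    nlinarith [min_le_right 1 (1 + t)]

lemma monotoneOn_add_rpow_mul {κ t : ℝ} (ht : -1 < t) (hκ : 0 ≤ κ) :
    MonotoneOn (fun x ↦ (κ + x) ^ t * x) (Set.Ici 0) := by
  intro y hy x _ hyx
  have hsub := le_add_rpow_mul_sub ht hκ hy hyx
  have hpos : 0 ≤ min 1 (1 + t) * ((κ + x) ^ t * (x - y)) :=
    mul_nonneg (le_min zero_le_one (by linarith))
      (mul_nonneg (rpow_nonneg (by linarith [Set.mem_Ici.1 hy]) t) (by linarith))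
  simp only
  linarith

lemma shifted_young_inequality {s ε σ d e : ℝ} (hs : -1 < s) (hε₀ : 0 < ε) (hε₁ : ε ≤ 1)
    (hσ : 0 ≤ σ) (hd : 0 ≤ d) (he : 0 ≤ e) :
    (σ + d) ^ s * d * e ≤ ε * ((σ + d) ^ s * d ^ 2) + ε⁻¹ ^ (1 + |s|) * ((σ + e) ^ s * e ^ 2) := by
  have hd' : 0 ≤ (σ + d) ^ s * d := mul_nonneg (rpow_nonneg (by linarith) s) hd
  have he' : 0 ≤ ε⁻¹ ^ (1 + |s|) * ((σ + e) ^ s * e ^ 2) := by positivity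
  rcases le_or_gt e (ε * d) with hed | hed
  · nlinarith [mul_le_mul_of_nonneg_left hed hd']
  have hε₁' : 1 ≤ ε⁻¹ := one_le_inv_iff₀.2 ⟨hε₀, hε₁⟩
  have hde : d ≤ ε⁻¹ * e := by rw [inv_mul_eq_div, le_div_iff₀ hε₀]; linarith
  have hmono : (σ + d) ^ s * d ≤ (σ + ε⁻¹ * e) ^ s * (ε⁻¹ * e) :=
    monotoneOn_add_rpow_mul hs hσ hd (by positivity : (0:ℝ) ≤ ε⁻¹ * e) hde
  have hcomp : (σ + ε⁻¹ * e) ^ s ≤ ε⁻¹ ^ |s| * (σ + e) ^ s := by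
    apply rpow_le_rpow_abs_mul_rpow hε₁' (by positivity) (by positivity) <;> nlinarith
  have hpow : ε⁻¹ ^ (1 + |s|) = ε⁻¹ * ε⁻¹ ^ |s| := by
    rw [rpow_add (by positivity), rpow_one]
  calc (σ + d) ^ s * d * e ≤ (σ + ε⁻¹ * e) ^ s * (ε⁻¹ * e) * e :=
        mul_le_mul_of_nonneg_right hmono he
    _ ≤ ε⁻¹ ^ |s| * (σ + e) ^ s * (ε⁻¹ * e) * e := by gcongr
    _ = ε⁻¹ ^ (1 + |s|) * ((σ + e) ^ s * e ^ 2) := by rw [hpow]; ring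
    _ ≤ _ := le_add_of_nonneg_left (by positivity)

lemma affine_nonneg_of_abs_le {c m r u : ℝ} (hu : |u| ≤ r) (h₁ : 0 ≤ c + m * r)
    (h₂ : 0 ≤ c - m * r) : 0 ≤ c + m * u := by
  obtain ⟨hu₁, hu₂⟩ := abs_le.1 hu
  rcases le_total 0 m with hm | hm <;> nlinarith

lemma add_max_norm_comparable_shift {E : Type*} [SeminormedAddCommGroup E] {κ : ℝ} (hκ : 0 ≤ κ)
    (P Q : E) :
    κ + max ‖P‖ ‖Q‖ ≤ 3 * (κ + ‖Q‖ + ‖P - Q‖) ∧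
      κ + ‖Q‖ + ‖P - Q‖ ≤ 3 * (κ + max ‖P‖ ‖Q‖) := by
  have hP := norm_le_norm_add_norm_sub' P Q
  have hPQ := norm_sub_le P Q
  have := le_max_left ‖P‖ ‖Q‖
  have := le_max_right ‖P‖ ‖Q‖
  constructor <;> cases max_cases ‖P‖ ‖Q‖ <;> linarith [norm_nonneg (P - Q)]

section InnerProductSpace

variable {E : Type*} [NormedAddCommGroup E] [InnerProductSpace ℝ E]

lemma norm_smul_sub_smul_sq (α β : ℝ) (P Q : E) :
    ‖α • P - β • Q‖ ^ 2 = (α * ‖P‖) ^ 2 + (β * ‖Q‖) ^ 2 - 2 * (α * β) * ⟪P, Q⟫ := by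
  rw [norm_sub_sq_real, norm_smul, norm_smul, real_inner_smul_left, real_inner_smul_right,
    mul_pow, mul_pow, Real.norm_eq_abs, Real.norm_eq_abs, sq_abs, sq_abs]
  ring

/-- `‖α • P - β • Q‖²` and `‖P - Q‖²` are affine in `⟪P, Q⟫ ∈ [-‖P‖‖Q‖, ‖P‖‖Q‖]`, so it suffices
to compare them at the two endpoints, where `P` and `Q` are parallel. -/
lemma norm_smul_sub_smul_sq_le {α β K : ℝ} {P Q : E}
    (hsub : (α * ‖P‖ - β * ‖Q‖) ^ 2 ≤ K * (‖P‖ - ‖Q‖) ^ 2)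
    (hadd : (α * ‖P‖ + β * ‖Q‖) ^ 2 ≤ K * (‖P‖ + ‖Q‖) ^ 2) :
    ‖α • P - β • Q‖ ^ 2 ≤ K * ‖P - Q‖ ^ 2 := by
  have := affine_nonneg_of_abs_le (abs_real_inner_le_norm P Q)
    (c := K * (‖P‖ ^ 2 + ‖Q‖ ^ 2) - (α * ‖P‖) ^ 2 - (β * ‖Q‖) ^ 2) (m := 2 * (α * β) - 2 * K)
    (by linarith) (by linarith)
  rw [norm_smul_sub_smul_sq, norm_sub_sq_real]
  linarith

lemma le_norm_smul_sub_smul_sq {α β k : ℝ} {P Q : E}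
    (hsub : k * (‖P‖ - ‖Q‖) ^ 2 ≤ (α * ‖P‖ - β * ‖Q‖) ^ 2)
    (hadd : k * (‖P‖ + ‖Q‖) ^ 2 ≤ (α * ‖P‖ + β * ‖Q‖) ^ 2) :
    k * ‖P - Q‖ ^ 2 ≤ ‖α • P - β • Q‖ ^ 2 := by
  have := affine_nonneg_of_abs_le (abs_real_inner_le_norm P Q)
    (c := (α * ‖P‖) ^ 2 + (β * ‖Q‖) ^ 2 - k * (‖P‖ ^ 2 + ‖Q‖ ^ 2)) (m := 2 * k - 2 * (α * β))
    (by linarith) (by linarith)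
  rw [norm_smul_sub_smul_sq, norm_sub_sq_real]
  linarith

lemma norm_add_rpow_smul_sub_le {κ t : ℝ} (ht : -1 < t) (hκ : 0 ≤ κ) (P Q : E) :
    ‖(κ + ‖P‖) ^ t • P - (κ + ‖Q‖) ^ t • Q‖ ≤
      2 * max 1 (1 + t) * (κ + max ‖P‖ ‖Q‖) ^ t * ‖P - Q‖ := by
  wlog h : ‖Q‖ ≤ ‖P‖ generalizing P Q
  · rw [max_comm ‖P‖, norm_sub_rev P Q, norm_sub_rev ((κ + ‖P‖) ^ t • P)]
    exact this Q P (le_of_not_ge h)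
  rw [max_eq_left h]
  have hM : 1 ≤ max 1 (1 + t) := le_max_left _ _
  have hW : 0 ≤ (κ + ‖P‖) ^ t := rpow_nonneg (by positivity) t
  have hmono : (κ + ‖Q‖) ^ t * ‖Q‖ ≤ (κ + ‖P‖) ^ t * ‖P‖ :=
    monotoneOn_add_rpow_mul ht hκ (norm_nonneg Q) (norm_nonneg P) h
  have hsub := add_rpow_mul_sub_le (t := t) hκ (norm_nonneg Q) h
  have hsq := norm_smul_sub_smul_sq_le (K := (2 * max 1 (1 + t) * (κ + ‖P‖) ^ t) ^ 2)
    (α := (κ + ‖P‖) ^ t) (β := (κ + ‖Q‖) ^ t) (P := P) (Q := Q) ?_ ?_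
  · rw [← mul_pow] at hsq
    exact (pow_le_pow_iff_left₀ (norm_nonneg _) (by positivity) two_ne_zero).1 hsq
  · rw [← mul_pow]
    apply pow_le_pow_left₀ (by linarith)
    nlinarith [mul_nonneg hW (sub_nonneg.2 h)]
  · rw [← mul_pow]
    apply pow_le_pow_left₀ (by positivity)
    nlinarith [mul_nonneg hW (norm_nonneg Q), mul_nonneg hW (norm_nonneg P)]

lemma le_norm_add_rpow_smul_sub_sq {κ t : ℝ} (ht : -1 < t) (hκ : 0 ≤ κ) (P Q : E) :
    (min 1 (1 + t) / 2 * (κ + max ‖P‖ ‖Q‖) ^ t) ^ 2 * ‖P - Q‖ ^ 2 ≤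
      ‖(κ + ‖P‖) ^ t • P - (κ + ‖Q‖) ^ t • Q‖ ^ 2 := by
  wlog h : ‖Q‖ ≤ ‖P‖ generalizing P Q
  · rw [max_comm ‖P‖, norm_sub_rev P Q, norm_sub_rev ((κ + ‖P‖) ^ t • P)]
    exact this Q P (le_of_not_ge h)
  rw [max_eq_left h]
  have hm₀ : 0 ≤ min 1 (1 + t) := le_min zero_le_one (by linarith)
  have hm₁ : min 1 (1 + t) ≤ 1 := min_le_left _ _
  have hW : 0 ≤ (κ + ‖P‖) ^ t := rpow_nonneg (by positivity) t
  have hQ : 0 ≤ (κ + ‖Q‖) ^ t * ‖Q‖ := mul_nonneg (rpow_nonneg (by positivity) t) (norm_nonneg Q)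
  have hsub := le_add_rpow_mul_sub ht hκ (norm_nonneg Q) h
  apply le_norm_smul_sub_smul_sq
  · rw [← mul_pow]
    apply pow_le_pow_left₀ (by have := mul_nonneg hW (sub_nonneg.2 h); positivity)
    nlinarith [mul_nonneg (mul_nonneg hm₀ hW) (sub_nonneg.2 h)]
  · rw [← mul_pow]
    apply pow_le_pow_left₀ (by positivity)
    nlinarith [mul_nonneg hW (norm_nonneg Q), mul_nonneg hW (sub_nonneg.2 h),
      mul_nonneg (mul_nonneg (sub_nonneg.2 hm₁) hW) (norm_nonneg P),
      mul_nonneg (mul_nonneg (sub_nonneg.2 hm₁) hW) (norm_nonneg Q)]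

lemma exists_norm_add_rpow_smul_sub_le_shifted {s : ℝ} (hs : -1 < s) :
    ∃ C > 0, ∀ κ, 0 ≤ κ → ∀ P Q : E,
      ‖(κ + ‖P‖) ^ s • P - (κ + ‖Q‖) ^ s • Q‖ ≤ C * ((κ + ‖Q‖ + ‖P - Q‖) ^ s * ‖P - Q‖) := by
  refine ⟨2 * max 1 (1 + s) * 3 ^ |s|, by positivity, fun κ hκ P Q => ?_⟩
  obtain ⟨h₁, h₂⟩ := add_max_norm_comparable_shift hκ P Q
  calc _ ≤ 2 * max 1 (1 + s) * (κ + max ‖P‖ ‖Q‖) ^ s * ‖P - Q‖ :=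
        norm_add_rpow_smul_sub_le hs hκ P Q
    _ ≤ 2 * max 1 (1 + s) * (3 ^ |s| * (κ + ‖Q‖ + ‖P - Q‖) ^ s) * ‖P - Q‖ := by
        gcongr
        exact rpow_le_rpow_abs_mul_rpow (by norm_num) (by positivity) (by positivity) h₁ h₂
    _ = _ := by ring

lemma exists_shifted_le_norm_add_rpow_smul_sub_sq {s : ℝ} (hs : -1 < s) :
    ∃ C > 0, ∀ κ, 0 ≤ κ → ∀ P Q : E,
      (κ + ‖Q‖ + ‖P - Q‖) ^ s * ‖P - Q‖ ^ 2 ≤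
        C * ‖(κ + ‖P‖) ^ (s / 2) • P - (κ + ‖Q‖) ^ (s / 2) • Q‖ ^ 2 := by
  set k := min 1 (1 + s / 2) / 2
  have hk : 0 < k := half_pos (lt_min one_pos (by linarith))
  refine ⟨3 ^ |s| / k ^ 2, by positivity, fun κ hκ P Q => ?_⟩
  obtain ⟨h₁, h₂⟩ := add_max_norm_comparable_shift hκ P Q
  have hF := le_norm_add_rpow_smul_sub_sq (t := s / 2) (by linarith) hκ P Q
  rw [mul_pow, ← rpow_mul_natCast (by positivity), Nat.cast_ofNat, div_mul_cancel₀ s two_ne_zero]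
    at hF
  calc (κ + ‖Q‖ + ‖P - Q‖) ^ s * ‖P - Q‖ ^ 2
      ≤ 3 ^ |s| * (κ + max ‖P‖ ‖Q‖) ^ s * ‖P - Q‖ ^ 2 := by
        gcongr
        exact rpow_le_rpow_abs_mul_rpow (by norm_num) (by positivity) (by positivity) h₂ h₁
    _ = 3 ^ |s| / k ^ 2 * (k ^ 2 * (κ + max ‖P‖ ‖Q‖) ^ s * ‖P - Q‖ ^ 2) := by field_simp
    _ ≤ _ := by gcongr

lemma exists_inner_add_rpow_smul_sub_le {s : ℝ} (hs : -1 < s) :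
    ∃ K > 0, ∀ ε, 0 < ε → ε ≤ 1 → ∀ κ, 0 ≤ κ → ∀ P Q R : E,
      ⟪(κ + ‖P‖) ^ s • P - (κ + ‖Q‖) ^ s • Q, R - Q⟫ ≤
        K * ε * ‖(κ + ‖P‖) ^ (s / 2) • P - (κ + ‖Q‖) ^ (s / 2) • Q‖ ^ 2 +
          K * ε⁻¹ ^ (1 + |s|) * ‖(κ + ‖R‖) ^ (s / 2) • R - (κ + ‖Q‖) ^ (s / 2) • Q‖ ^ 2 := by
  obtain ⟨C₁, hC₁, hS⟩ := exists_norm_add_rpow_smul_sub_le_shifted (E := E) hs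
  obtain ⟨C₂, hC₂, hF⟩ := exists_shifted_le_norm_add_rpow_smul_sub_sq (E := E) hs
  refine ⟨C₁ * C₂, by positivity, fun ε hε₀ hε₁ κ hκ P Q R => ?_⟩
  calc _ ≤ ‖(κ + ‖P‖) ^ s • P - (κ + ‖Q‖) ^ s • Q‖ * ‖R - Q‖ := real_inner_le_norm _ _
    _ ≤ C₁ * ((κ + ‖Q‖ + ‖P - Q‖) ^ s * ‖P - Q‖) * ‖R - Q‖ := by gcongr; exact hS κ hκ P Q
    _ = C₁ * ((κ + ‖Q‖ + ‖P - Q‖) ^ s * ‖P - Q‖ * ‖R - Q‖) := by ring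
    _ ≤ C₁ * (ε * ((κ + ‖Q‖ + ‖P - Q‖) ^ s * ‖P - Q‖ ^ 2) +
          ε⁻¹ ^ (1 + |s|) * ((κ + ‖Q‖ + ‖R - Q‖) ^ s * ‖R - Q‖ ^ 2)) := by
        gcongr
        exact shifted_young_inequality hs hε₀ hε₁ (by positivity) (norm_nonneg _) (norm_nonneg _)
    _ ≤ C₁ * (ε * (C₂ * ‖(κ + ‖P‖) ^ (s / 2) • P - (κ + ‖Q‖) ^ (s / 2) • Q‖ ^ 2) +
          ε⁻¹ ^ (1 + |s|) *
            (C₂ * ‖(κ + ‖R‖) ^ (s / 2) • R - (κ + ‖Q‖) ^ (s / 2) • Q‖ ^ 2)) := by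
        gcongr ?_ * (_ * ?_ + _ * ?_)
        exacts [hF κ hκ P Q, hF κ hκ R Q]
    _ = _ := by ring

end InnerProductSpace

theorem stmt12 (N n : ℕ) (q : ℝ) (hq : 1 < q) (δ : ℝ) (hδ : 0 < δ) :
    ∃ C : ℝ, 1 ≤ C ∧ ∀ κ : ℝ, 0 ≤ κ →
      ∀ P Q R : EuclideanSpace ℝ (Fin N × Fin n),
        ⟪(κ + ‖P‖) ^ (q - 2) • P - (κ + ‖Q‖) ^ (q - 2) • Q, R - Q⟫ ≤
          δ * ‖(κ + ‖P‖) ^ ((q - 2) / 2) • P - (κ + ‖Q‖) ^ ((q - 2) / 2) • Q‖ ^ 2 +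
            C * ‖(κ + ‖R‖) ^ ((q - 2) / 2) • R - (κ + ‖Q‖) ^ ((q - 2) / 2) • Q‖ ^ 2 := by
  obtain ⟨K, hK, hyoung⟩ :=
    exists_inner_add_rpow_smul_sub_le (E := EuclideanSpace ℝ (Fin N × Fin n))
      (by linarith : -1 < q - 2)
  set ε := min 1 (δ / K)
  have hε₀ : 0 < ε := lt_min one_pos (by positivity)
  have hKε : K * ε ≤ δ := by
    calc K * ε ≤ K * (δ / K) := by gcongr; exact min_le_right _ _
      _ = δ := by field_simp
  refine ⟨max 1 (K * ε⁻¹ ^ (1 + |q - 2|)), le_max_left _ _, fun κ hκ P Q R => ?_⟩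
  refine (hyoung ε hε₀ (min_le_left _ _) κ hκ P Q R).trans ?_
  gcongr
  exact le_max_right _ _
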